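/- Let L < 0 < U with U² ≥ L², let ρ = −L/(U − L), let t* = min{ j ∈ {1,…,K} : ρ > Σ_{t=j+1}^K π_t }, let q*_{t*} = (ρ − Σ_{t=t*+1}^K π_t)/π_{t*}, and R² = (U² − L²)·q*_{t*} + L² > 0. Consider minimizing the objective J(A) = Σ_{t=1}^{t*−1} π_t·L²/A_t + π_{t*}·R²/A_{t*} + Σ_{t=t*+1}^K π_t·U²/A_t over all monotone non-increasing allocation rules A ∈ (0,1]^K with Σ_{t=1}^K π_t·c_t·A_t ≤ B̄, where 0 < B̄ < Σ_{t=1}^K π_t·c_t. Then there exist λ ≥ 0, indices t⁻ ≤ t* ≤ t⁺, and an optimal solution A* of this problem with Σ_{t=1}^K π_t·c_t·A*_t = B̄ such that: A*_t = min(1, √(L²/(λ·c_t))) for all t < t⁻; A*_{t⁻} = A*_{t⁻+1} = ⋯ = A*_{t⁺}; and A*_t = min(1, √(U²/(λ·c_t))) for all t > t⁺. -/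

import Mathlib

/-! The objective `∑ π_t w_t / A_t` (with `w = L²` before `t*`, `R²` at `t*` and `U²` after) is
convex in `A`, so an allocation that spends the budget and satisfies the Lagrangian conditions
with some multiplier `λ` against every non-increasing competitor is optimal. Away from `t*` these
conditions give `A_t = min(1, √(w_t / (λ c_t)))`, which is non-increasing since `c` increases.
Around `t*` the monotonicity constraint binds: the types of a block `(p, q] ∋ t*` are pooled to
the common value `min(1, √(μ / λ))`, where `μ` is the minimax, over blocks straddling `t*`, of
the ratio of `∑ π w` to `∑ π c`. The minimax choice makes the pooled profile non-increasing, and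
summation by parts shows the Lagrangian condition on the block against non-increasing
competitors. Finally `λ` is chosen by the intermediate value theorem to exhaust the budget. -/

open Finset

lemma div_sq_mul_sub_le_div_sub_div {w a b : ℝ} (hw : 0 ≤ w) (ha : 0 < a) (hb : 0 < b) :
    w / a ^ 2 * (a - b) ≤ w / b - w / a := by
  have key : w / b - w / a - w / a ^ 2 * (a - b) = w * (a - b) ^ 2 / (a ^ 2 * b) := by
    field_simp
  have : 0 ≤ w * (a - b) ^ 2 / (a ^ 2 * b) := by positivity
  linarith

lemma sum_Ioc_eq_add_sum_Ioc (f : ℕ → ℝ) {a b : ℕ} (hab : a < b) :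
    ∑ t ∈ Ioc a b, f t = f (a + 1) + ∑ t ∈ Ioc (a + 1) b, f t := by
  rw [← insert_Ioc_add_one_left_eq_Ioc hab, sum_insert (by simp)]

lemma Icc_one_eq_Ioc_zero (K : ℕ) : Icc 1 K = Ioc 0 K := Icc_add_one_left_eq_Ioc 0 K

lemma antitoneOn_const_div {c : ℕ → ℝ} {S : Set ℕ} {a : ℝ} (ha : 0 ≤ a)
    (hc : ∀ t ∈ S, 0 < c t) (hmono : MonotoneOn c S) : AntitoneOn (fun t => a / c t) S :=
  fun _ hs _ ht hst => div_le_div_of_nonneg_left ha (hc _ hs) (hmono hs ht hst)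

lemma sum_Icc_one_eq_add_add (f : ℕ → ℝ) {m K : ℕ} (hm : m ∈ Icc 1 K) :
    ∑ t ∈ Icc 1 K, f t = ∑ t ∈ Icc 1 (m - 1), f t + f m + ∑ t ∈ Icc (m + 1) K, f t := by
  obtain ⟨hm₁, hmK⟩ := mem_Icc.mp hm
  obtain ⟨n, rfl⟩ : ∃ n, m = n + 1 := ⟨m - 1, by omega⟩
  rw [Nat.add_sub_cancel, Icc_one_eq_Ioc_zero, Icc_one_eq_Ioc_zero, Icc_add_one_left_eq_Ioc,
    ← sum_Ioc_succ_top (Nat.zero_le n), sum_Ioc_consecutive _ (Nat.zero_le _) hmK]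

/-- Summation by parts. -/
lemma sum_mul_le_sum_mul_of_tail_nonneg (r x : ℕ → ℝ) {a b : ℕ} (hab : a ≤ b)
    (hx : AntitoneOn x (Set.Ioc a b)) (hr : ∀ j ∈ Ioo a b, 0 ≤ ∑ t ∈ Ioc j b, r t) :
    ∑ t ∈ Ioc a b, r t * x t ≤ (∑ t ∈ Ioc a b, r t) * x (a + 1) := by
  induction hab using Nat.decreasingInduction with
  | self => simp
  | of_succ a hab ih =>
    rcases (Nat.succ_le_of_lt hab).eq_or_lt with hb | hb
    · simp [← hb]
    have hx' : AntitoneOn x (Set.Ioc (a + 1) b) :=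
      hx.mono (Set.Ioc_subset_Ioc_left (Nat.le_succ a))
    have hr' : ∀ j ∈ Ioo (a + 1) b, 0 ≤ ∑ t ∈ Ioc j b, r t := fun j hj =>
      hr j (Ioo_subset_Ioo_left (Nat.le_succ a) hj)
    have htail : 0 ≤ ∑ t ∈ Ioc (a + 1) b, r t := hr (a + 1) (by simp; omega)
    have hstep : x (a + 1 + 1) ≤ x (a + 1) := hx (by simp; omega) (by simp; omega) (by omega)
    rw [sum_Ioc_eq_add_sum_Ioc _ hab, sum_Ioc_eq_add_sum_Ioc _ hab]
    nlinarith [ih hx' hr', mul_le_mul_of_nonneg_left hstep htail]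

/-- `μ` is the minimax, over `a < m ≤ b`, of the ratio `∑ f / ∑ g` on `(a, b]`, and `(p, q]` is
a block attaining it. -/
lemma exists_pooled_interval (f g : ℕ → ℝ) {m X : ℕ} (hm : 0 < m) (hmX : m ≤ X)
    (hg : ∀ t ∈ Icc 1 X, 0 < g t) :
    ∃ p < m, ∃ q ∈ Icc m X, ∃ μ : ℝ,
      ∑ t ∈ Ioc p q, (f t - μ * g t) = 0 ∧
      (∀ a ≤ q, 0 ≤ ∑ t ∈ Ioc a q, (f t - μ * g t)) ∧
      ∀ b ∈ Icc m X, ∑ t ∈ Ioc p b, (f t - μ * g t) ≤ 0 := by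
  set F : ℕ → ℕ → ℝ := fun a b => (∑ t ∈ Ioc a b, f t) / ∑ t ∈ Ioc a b, g t
  have hG : ∀ a b, a < b → b ≤ X → 0 < ∑ t ∈ Ioc a b, g t := fun a b hab hbX =>
    sum_pos (fun t ht => hg t (by simp at ht ⊢; omega)) ⟨b, by simp [hab]⟩
  have hne : (Icc m X).Nonempty := nonempty_Icc.mpr hmX
  choose β hβ hβmax using fun a => (Icc m X).exists_max_image (F a) hne
  obtain ⟨p, hp, hpmin⟩ := (range m).exists_min_image (fun a => F a (β a)) ⟨0, by simpa⟩
  set q := β p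
  set μ := F p q
  set D : ℕ → ℕ → ℝ := fun a b => ∑ t ∈ Ioc a b, (f t - μ * g t)
  have hD : ∀ a b, a < b → b ≤ X → D a b = (F a b - μ) * ∑ t ∈ Ioc a b, g t := by
    intro a b hab hbX
    simp only [D, F, sum_sub_distrib, ← mul_sum]
    field_simp [(hG a b hab hbX).ne']
  have hadd : ∀ a b e, a ≤ b → b ≤ e → D a e = D a b + D b e := fun a b e h₁ h₂ =>
    (sum_Ioc_consecutive _ h₁ h₂).symm
  rw [mem_range] at hp
  have hq := hβ p
  rw [mem_Icc] at hq
  have hDp : ∀ b ∈ Icc m X, D p b ≤ 0 := by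
    intro b hb
    rw [mem_Icc] at hb
    rw [hD p b (by omega) hb.2]
    exact mul_nonpos_of_nonpos_of_nonneg (sub_nonpos.mpr (hβmax p b (by simpa using hb)))
      (hG p b (by omega) hb.2).le
  have hwit : ∀ a < m, 0 ≤ D a (β a) := by
    intro a ha
    have hb := hβ a
    rw [mem_Icc] at hb
    rw [hD a (β a) (by omega) hb.2]
    exact mul_nonneg (sub_nonneg.mpr (hpmin a (by simpa using ha))) (hG a _ (by omega) hb.2).le
  have hDpq : D p q = 0 := by simp [hD p q (by omega) hq.2, μ]
  refine ⟨p, hp, q, by simpa using hq, μ, hDpq, fun a ha => ?_, hDp⟩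
  by_contra! hneg
  rcases lt_or_ge a p with hap | hpa
  · have hb := hβ a
    rw [mem_Icc] at hb
    have := hadd a p q hap.le (by omega)
    have := hadd a p (β a) hap.le (by omega)
    linarith [hwit a (by omega), hDp (β a) (by simpa using hb)]
  · have := hadd p a q hpa ha
    rcases lt_or_ge a m with ham | hma
    · have hb := hβ a
      rw [mem_Icc] at hb
      have := hadd p a (β a) hpa (by omega)
      linarith [hwit a ham, hDp (β a) (by simpa using hb)]
    · linarith [hDp a (by simp; omega)]

lemma exists_sum_mul_min_one_sqrt_div_eq {ι : Type*} (s : Finset ι) (a k : ι → ℝ)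
    (hk : ∀ i ∈ s, 0 < k i) {B : ℝ} (hB₀ : 0 < B)
    (hB : B ≤ ∑ i ∈ s, a i) :
    ∃ lam > 0, ∑ i ∈ s, a i * min 1 (Real.sqrt (k i / lam)) = B := by
  set ψ : ℝ → ℝ := fun x => ∑ i ∈ s, a i * min 1 (Real.sqrt (k i) * x)
  set S := ∑ i ∈ s, (Real.sqrt (k i))⁻¹
  have hS : 0 ≤ S := sum_nonneg fun i hi => by positivity
  have hψS : ψ S = ∑ i ∈ s, a i := by
    refine sum_congr rfl fun i hi => ?_
    have hki : 0 < Real.sqrt (k i) := Real.sqrt_pos.mpr (hk i hi)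
    have : (Real.sqrt (k i))⁻¹ ≤ S :=
      single_le_sum (f := fun i => (Real.sqrt (k i))⁻¹) (fun j _ => by positivity) hi
    rw [min_eq_left, mul_one]
    calc (1 : ℝ) = Real.sqrt (k i) * (Real.sqrt (k i))⁻¹ := (mul_inv_cancel₀ hki.ne').symm
      _ ≤ Real.sqrt (k i) * S := by gcongr
  have hψcont : Continuous ψ := by fun_prop
  obtain ⟨x, hx, hψx⟩ : ∃ x ∈ Set.Icc 0 S, ψ x = B :=
    intermediate_value_Icc hS hψcont.continuousOn ⟨by simp [ψ, hB₀.le], hψS ▸ hB⟩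
  have hx₀ : 0 < x := by
    refine hx.1.lt_of_ne fun h => ?_
    subst h
    simp [ψ] at hψx
    linarith
  refine ⟨(x ^ 2)⁻¹, by positivity, ?_⟩
  rw [← hψx]
  refine sum_congr rfl fun i hi => ?_
  rw [div_inv_eq_mul, Real.sqrt_mul' _ (sq_nonneg x), Real.sqrt_sq hx₀.le]

/-- Each `f / x` lies above its tangent line at `A`, whose slope is the Lagrangian term. -/
lemma sum_div_le_sum_div_of_lagrangian {ι : Type*} (s : Finset ι) (f g A A' : ι → ℝ) {lam : ℝ}
    (hf : ∀ i ∈ s, 0 ≤ f i) (hA : ∀ i ∈ s, 0 < A i) (hA' : ∀ i ∈ s, 0 < A' i) (hlam : 0 ≤ lam)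
    (hbudget : ∑ i ∈ s, g i * A' i ≤ ∑ i ∈ s, g i * A i)
    (hslack : 0 ≤ ∑ i ∈ s, (f i / A i ^ 2 - lam * g i) * (A i - A' i)) :
    ∑ i ∈ s, f i / A i ≤ ∑ i ∈ s, f i / A' i := by
  have htangent : ∑ i ∈ s, f i / A i ^ 2 * (A i - A' i) ≤ ∑ i ∈ s, (f i / A' i - f i / A i) :=
    sum_le_sum fun i hi => div_sq_mul_sub_le_div_sub_div (hf i hi) (hA i hi) (hA' i hi)
  have hsplit : ∑ i ∈ s, f i / A i ^ 2 * (A i - A' i) = lam * (∑ i ∈ s, g i * A i -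
      ∑ i ∈ s, g i * A' i) + ∑ i ∈ s, (f i / A i ^ 2 - lam * g i) * (A i - A' i) := by
    rw [mul_sub, mul_sum, mul_sum, ← sum_sub_distrib, ← sum_add_distrib]
    exact sum_congr rfl fun i _ => by ring
  rw [sum_sub_distrib] at htangent
  nlinarith [mul_nonneg hlam (sub_nonneg.mpr hbudget)]

lemma lagrangian_term_nonneg {π w c lam A' : ℝ} (hπ : 0 ≤ π) (hw : 0 < w) (hc : 0 < c)
    (hlam : 0 < lam) (hA' : A' ≤ 1) :
    0 ≤ (π * w / min 1 (Real.sqrt (w / c / lam)) ^ 2 - lam * (π * c)) *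
      (min 1 (Real.sqrt (w / c / lam)) - A') := by
  rcases le_or_gt 1 (Real.sqrt (w / c / lam)) with h | h
  · rw [min_eq_left h]
    have : lam * c ≤ w := by
      rwa [Real.one_le_sqrt, one_le_div hlam, le_div_iff₀ hc] at h
    have : 0 ≤ π * w - lam * (π * c) := by nlinarith
    simpa using mul_nonneg this (sub_nonneg.mpr hA')
  · rw [min_eq_right h.le, Real.sq_sqrt (by positivity)]
    field_simp
    simp

/-- By summation by parts against the antitone `A'`: the Lagrangian terms have nonnegative tail
sums on the block, and their total vanishes unless the block is saturated at `1`. -/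
lemma pooled_lagrangian_nonneg (f g A' : ℕ → ℝ) {a b : ℕ} (hab : a < b) {μ lam : ℝ}
    (hμ : 0 < μ) (hlam : 0 < lam) (hg : ∀ t ∈ Ioc a b, 0 ≤ g t)
    (htail : ∀ j ∈ Ico a b, 0 ≤ ∑ t ∈ Ioc j b, (f t - μ * g t))
    (htotal : ∑ t ∈ Ioc a b, (f t - μ * g t) = 0)
    (hA' : AntitoneOn A' (Set.Ioc a b)) (hA'₁ : A' (a + 1) ≤ 1) :
    0 ≤ ∑ t ∈ Ioc a b, (f t / min 1 (Real.sqrt (μ / lam)) ^ 2 - lam * g t) *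
      (min 1 (Real.sqrt (μ / lam)) - A' t) := by
  set v := min 1 (Real.sqrt (μ / lam))
  set r : ℕ → ℝ := fun t => f t / v ^ 2 - lam * g t
  have hv : 0 < v := lt_min one_pos (by positivity)
  have hv2 : v ^ 2 * lam ≤ μ := by
    rw [← le_div_iff₀ hlam, ← Real.sq_sqrt (div_pos hμ hlam).le]
    exact pow_le_pow_left₀ hv.le (min_le_right _ _) 2
  have hr : ∀ j, ∑ t ∈ Ioc j b, r t = (∑ t ∈ Ioc j b, (f t - μ * g t)) / v ^ 2
      + (μ / v ^ 2 - lam) * ∑ t ∈ Ioc j b, g t := by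
    intro j
    rw [sum_div, mul_sum, ← sum_add_distrib]
    exact sum_congr rfl fun t _ => by simp only [r]; field_simp; ring
  have hrtail : ∀ j ∈ Ico a b, 0 ≤ ∑ t ∈ Ioc j b, r t := by
    intro j hj
    rw [mem_Ico] at hj
    rw [hr j]
    have : 0 ≤ μ / v ^ 2 - lam := by rw [sub_nonneg, le_div_iff₀ (by positivity)]; linarith
    have : 0 ≤ ∑ t ∈ Ioc j b, g t := sum_nonneg fun t ht => hg t (by simp at ht ⊢; omega)
    have := htail j (by simp; omega)
    positivity
  have habel := sum_mul_le_sum_mul_of_tail_nonneg r (fun t => A' t - v) hab.le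
    (fun s hs t ht hst => sub_le_sub_right (hA' hs ht hst) v)
    (fun j hj => hrtail j (Ioo_subset_Ico_self hj))
  have hfirst : (∑ t ∈ Ioc a b, r t) * (A' (a + 1) - v) ≤ 0 := by
    rcases le_or_gt 1 (Real.sqrt (μ / lam)) with h | h
    · have hv1 : v = 1 := min_eq_left h
      exact mul_nonpos_of_nonneg_of_nonpos (hrtail a (by simp [hab])) (by linarith)
    · have hv2' : v ^ 2 = μ / lam := by
        rw [show v = _ from min_eq_right h.le, Real.sq_sqrt (by positivity)]
      rw [hr a, htotal, hv2']
      field_simp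
      simp
  have hneg : ∑ t ∈ Ioc a b, r t * (v - A' t) = -∑ t ∈ Ioc a b, r t * (A' t - v) := by
    rw [← sum_neg_distrib]
    exact sum_congr rfl fun t _ => by ring
  change 0 ≤ ∑ t ∈ Ioc a b, r t * (v - A' t)
  linarith

def IsFeasibleAllocation (K : ℕ) (π c : ℕ → ℝ) (B : ℝ) (A : ℕ → ℝ) : Prop :=
  (∀ t ∈ Icc 1 K, 0 < A t ∧ A t ≤ 1) ∧
  (∀ s ∈ Icc 1 K, ∀ t ∈ Icc 1 K, s ≤ t → A t ≤ A s) ∧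
  ∑ t ∈ Icc 1 K, π t * c t * A t ≤ B

noncomputable def pooledRatio (c w : ℕ → ℝ) (p q : ℕ) (μ : ℝ) (t : ℕ) : ℝ :=
  if p < t ∧ t ≤ q then μ else w t / c t

section pooledRatio

variable {c w : ℕ → ℝ} {p q t : ℕ} {μ : ℝ}

lemma pooledRatio_of_mem (h₁ : p < t) (h₂ : t ≤ q) : pooledRatio c w p q μ t = μ :=
  if_pos ⟨h₁, h₂⟩

lemma pooledRatio_of_not_mem (h : t ≤ p ∨ q < t) : pooledRatio c w p q μ t = w t / c t :=
  if_neg (by omega)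

lemma pooledRatio_pos (hμ : 0 < μ) (hw : 0 < w t) (hc : 0 < c t) :
    0 < pooledRatio c w p q μ t := by
  unfold pooledRatio
  split_ifs <;> positivity

lemma pooledRatio_antitoneOn {K m : ℕ} (hpm : p < m) (hmq : m ≤ q)
    (hpre : AntitoneOn (fun t => w t / c t) (Set.Ico 1 m))
    (hsuf : AntitoneOn (fun t => w t / c t) (Set.Ioc m K))
    (hp : 1 ≤ p → μ ≤ w p / c p) (hq : q < K → w (q + 1) / c (q + 1) ≤ μ) :
    AntitoneOn (pooledRatio c w p q μ) (Set.Icc 1 K) := by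
  have hle : ∀ s ∈ Set.Icc 1 K, s ≤ q → μ ≤ pooledRatio c w p q μ s := by
    rintro s ⟨hs₁, -⟩ hsq
    rcases le_or_gt s p with hsp | hps
    · rw [pooledRatio_of_not_mem (Or.inl hsp)]
      exact (hp (hs₁.trans hsp)).trans
        (hpre ⟨hs₁, by omega⟩ ⟨hs₁.trans hsp, by omega⟩ hsp)
    · rw [pooledRatio_of_mem hps hsq]
  have hge : ∀ t ∈ Set.Icc 1 K, p < t → pooledRatio c w p q μ t ≤ μ := by
    rintro t ⟨-, htK⟩ hpt
    rcases le_or_gt t q with htq | hqt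
    · rw [pooledRatio_of_mem hpt htq]
    · rw [pooledRatio_of_not_mem (Or.inr hqt)]
      exact (hsuf ⟨by omega, by omega⟩ ⟨by omega, htK⟩ hqt).trans (hq (by omega))
  intro s hs t ht hst
  by_cases htp : t ≤ p
  · rw [pooledRatio_of_not_mem (Or.inl htp), pooledRatio_of_not_mem (Or.inl (hst.trans htp))]
    exact hpre ⟨hs.1, by omega⟩ ⟨ht.1, by omega⟩ hst
  by_cases hqs : q < s
  · rw [pooledRatio_of_not_mem (Or.inr hqs), pooledRatio_of_not_mem (Or.inr (hqs.trans_le hst))]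
    exact hsuf ⟨by omega, hs.2⟩ ⟨by omega, ht.2⟩ hst
  exact (hge t ht (by omega)).trans (hle s hs (by omega))

end pooledRatio

lemma sum_div_min_one_sqrt_pooledRatio_le {K p q : ℕ} {c π w : ℕ → ℝ} {μ lam B : ℝ} (hpq : p < q)
    (hqK : q ≤ K) (hc : ∀ t ∈ Icc 1 K, 0 < c t) (hπ : ∀ t ∈ Icc 1 K, 0 < π t)
    (hw : ∀ t ∈ Icc 1 K, 0 < w t) (hμ : 0 < μ) (hlam : 0 < lam)
    (htail : ∀ a ∈ Ico p q, 0 ≤ ∑ t ∈ Ioc a q, (π t * w t - μ * (π t * c t)))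
    (htotal : ∑ t ∈ Ioc p q, (π t * w t - μ * (π t * c t)) = 0)
    (hbudget : ∑ t ∈ Icc 1 K,
      π t * c t * min 1 (Real.sqrt (pooledRatio c w p q μ t / lam)) = B)
    {A' : ℕ → ℝ} (hA' : IsFeasibleAllocation K π c B A') :
    ∑ t ∈ Icc 1 K, π t * w t / min 1 (Real.sqrt (pooledRatio c w p q μ t / lam)) ≤
      ∑ t ∈ Icc 1 K, π t * w t / A' t := by
  set A : ℕ → ℝ := fun t => min 1 (Real.sqrt (pooledRatio c w p q μ t / lam))
  obtain ⟨hA'pos, hA'anti, hA'budget⟩ := hA'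
  set r : ℕ → ℝ := fun t => (π t * w t / A t ^ 2 - lam * (π t * c t)) * (A t - A' t)
  have hmem : ∀ {a b t}, a ≤ b → b ≤ K → t ∈ Ioc a b → t ∈ Icc 1 K := fun _ _ ht => by
    simp at ht ⊢; omega
  have hout : ∀ {a b}, a ≤ b → b ≤ K → (∀ t ∈ Ioc a b, t ≤ p ∨ q < t) →
      0 ≤ ∑ t ∈ Ioc a b, r t := fun hab hbK hab' => sum_nonneg fun t ht => by
    have htK := hmem hab hbK ht
    simp only [r, A, pooledRatio_of_not_mem (hab' t ht)]
    exact lagrangian_term_nonneg (hπ t htK).le (hw t htK) (hc t htK) hlam (hA'pos t htK).2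
  have hblock : 0 ≤ ∑ t ∈ Ioc p q, r t := by
    have hv : ∀ t ∈ Ioc p q, A t = min 1 (Real.sqrt (μ / lam)) := fun t ht => by
      rw [mem_Ioc] at ht
      simp only [A, pooledRatio_of_mem ht.1 ht.2]
    have hblockmem : ∀ t ∈ Set.Ioc p q, t ∈ Icc 1 K := fun t ht =>
      hmem hpq.le hqK (by simpa using ht)
    refine (pooled_lagrangian_nonneg (fun t => π t * w t) (fun t => π t * c t) A' hpq hμ hlam
      (fun t ht => (mul_pos (hπ t (hmem hpq.le hqK ht)) (hc t (hmem hpq.le hqK ht))).le)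
      htail htotal (fun s hs t ht hst => hA'anti s (hblockmem s hs) t (hblockmem t ht) hst)
      (hA'pos (p + 1) (hblockmem _ ⟨by omega, by omega⟩)).2).trans_eq
      (sum_congr rfl fun t ht => ?_)
    simp only [r, hv t ht]
  refine sum_div_le_sum_div_of_lagrangian _ _ (fun t => π t * c t) A A'
    (fun t ht => (mul_pos (hπ t ht) (hw t ht)).le)
    (fun t ht => lt_min one_pos
      (Real.sqrt_pos.mpr (div_pos (pooledRatio_pos hμ (hw t ht) (hc t ht)) hlam)))
    (fun t ht => (hA'pos t ht).1) hlam.le (hbudget ▸ hA'budget) ?_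
  change 0 ≤ ∑ t ∈ Icc 1 K, r t
  rw [Icc_one_eq_Ioc_zero, ← sum_Ioc_consecutive _ (Nat.zero_le q) hqK,
    ← sum_Ioc_consecutive _ (Nat.zero_le p) hpq.le]
  have := hout (Nat.zero_le p) (hpq.le.trans hqK) (fun t ht => Or.inl (mem_Ioc.mp ht).2)
  have := hout hqK le_rfl (fun t ht => Or.inr (mem_Ioc.mp ht).1)
  linarith

lemma exists_pooledRatio_antitoneOn {K m : ℕ} (hm : m ∈ Icc 1 K) {c π w : ℕ → ℝ}
    (hc : ∀ t ∈ Icc 1 K, 0 < c t) (hπ : ∀ t ∈ Icc 1 K, 0 < π t) (hw : ∀ t ∈ Icc 1 K, 0 < w t)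
    (hpre : AntitoneOn (fun t => w t / c t) (Set.Ico 1 m))
    (hsuf : AntitoneOn (fun t => w t / c t) (Set.Ioc m K)) :
    ∃ p < m, ∃ q ∈ Icc m K, ∃ μ > 0,
      (∀ a ≤ q, 0 ≤ ∑ t ∈ Ioc a q, (π t * w t - μ * (π t * c t))) ∧
      ∑ t ∈ Ioc p q, (π t * w t - μ * (π t * c t)) = 0 ∧
      AntitoneOn (pooledRatio c w p q μ) (Set.Icc 1 K) := by
  obtain ⟨hm₁, hmK⟩ := mem_Icc.mp hm
  obtain ⟨p, hpm, q, hq, μ, htotal, htail, hhead⟩ := exists_pooled_interval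
    (fun t => π t * w t) (fun t => π t * c t) hm₁ hmK fun t ht => mul_pos (hπ t ht) (hc t ht)
  obtain ⟨hmq, hqK⟩ := mem_Icc.mp hq
  have hmem : ∀ t ∈ Ioc p q, t ∈ Icc 1 K := fun t ht => by simp at ht ⊢; omega
  have hμ : 0 < μ := by
    have hW : 0 < ∑ t ∈ Ioc p q, π t * w t :=
      sum_pos (fun t ht => mul_pos (hπ t (hmem t ht)) (hw t (hmem t ht))) ⟨q, by simp; omega⟩
    have hC : 0 < ∑ t ∈ Ioc p q, π t * c t :=
      sum_pos (fun t ht => mul_pos (hπ t (hmem t ht)) (hc t (hmem t ht))) ⟨q, by simp; omega⟩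
    rw [sum_sub_distrib, ← mul_sum, sub_eq_zero] at htotal
    exact pos_of_mul_pos_left (htotal ▸ hW) hC.le
  -- at the ends of the block, the sign conditions on the pooled sums reduce to single terms
  have hp : 1 ≤ p → μ ≤ w p / c p := by
    intro hp₁
    obtain ⟨n, rfl⟩ : ∃ n, p = n + 1 := ⟨p - 1, by omega⟩
    have hpK : n + 1 ∈ Icc 1 K := by simp; omega
    have := htail n (by omega)
    rw [sum_Ioc_eq_add_sum_Ioc _ (by omega), htotal, add_zero] at this
    rw [le_div_iff₀ (hc _ hpK)]
    nlinarith [hπ _ hpK]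
  have hq' : q < K → w (q + 1) / c (q + 1) ≤ μ := by
    intro hqK'
    have hqK₁ : q + 1 ∈ Icc 1 K := by simp; omega
    have := hhead (q + 1) (by simp; omega)
    rw [sum_Ioc_succ_top (by omega), htotal, zero_add] at this
    rw [div_le_iff₀ (hc _ hqK₁)]
    nlinarith [hπ _ hqK₁]
  exact ⟨p, hpm, q, hq, μ, hμ, htail, htotal, pooledRatio_antitoneOn hpm hmq hpre hsuf hp hq'⟩

theorem exists_optimal_pooled_allocation (K m : ℕ) (hm : m ∈ Icc 1 K) (c π w : ℕ → ℝ)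
    (hc : ∀ t ∈ Icc 1 K, 0 < c t) (hπ : ∀ t ∈ Icc 1 K, 0 < π t) (hw : ∀ t ∈ Icc 1 K, 0 < w t)
    (hpre : AntitoneOn (fun t => w t / c t) (Set.Ico 1 m))
    (hsuf : AntitoneOn (fun t => w t / c t) (Set.Ioc m K))
    (B : ℝ) (hB₀ : 0 < B) (hB : B < ∑ t ∈ Icc 1 K, π t * c t) :
    ∃ lam > 0, ∃ p < m, ∃ q ∈ Icc m K, ∃ A : ℕ → ℝ,
      IsFeasibleAllocation K π c B A ∧ ∑ t ∈ Icc 1 K, π t * c t * A t = B ∧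
      (∀ A', IsFeasibleAllocation K π c B A' →
        ∑ t ∈ Icc 1 K, π t * w t / A t ≤ ∑ t ∈ Icc 1 K, π t * w t / A' t) ∧
      (∀ t, t ≤ p ∨ q < t → A t = min 1 (Real.sqrt (w t / (lam * c t)))) ∧
      ∀ t, p < t → t ≤ q → A t = A m := by
  obtain ⟨p, hpm, q, hq, μ, hμ, htail, htotal, hkanti⟩ :=
    exists_pooledRatio_antitoneOn hm hc hπ hw hpre hsuf
  obtain ⟨hmq, hqK⟩ := mem_Icc.mp hq
  set k := pooledRatio c w p q μ
  have hk : ∀ t ∈ Icc 1 K, 0 < k t := fun t ht => pooledRatio_pos hμ (hw t ht) (hc t ht)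
  obtain ⟨lam, hlam, hbudget⟩ :=
    exists_sum_mul_min_one_sqrt_div_eq (Icc 1 K) (fun t => π t * c t) k hk hB₀ hB.le
  set A : ℕ → ℝ := fun t => min 1 (Real.sqrt (k t / lam))
  have hfeas : IsFeasibleAllocation K π c B A := by
    refine ⟨fun t ht => ⟨lt_min one_pos (by have := hk t ht; positivity), min_le_left _ _⟩,
      fun s hs t ht hst => ?_, hbudget.le⟩
    have := hkanti (by simpa using hs) (by simpa using ht) hst
    simp only [A]
    gcongr
  refine ⟨lam, hlam, p, hpm, q, hq, A, hfeas, hbudget, fun A' hA' =>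
    sum_div_min_one_sqrt_pooledRatio_le (by omega) hqK hc hπ hw hμ hlam (fun a ha => htail a (by
      simp at ha; omega)) htotal hbudget hA', fun t ht => ?_, fun t ht₁ ht₂ => ?_⟩
  · simp only [A, k, pooledRatio_of_not_mem ht, div_div, mul_comm lam]
  · simp only [A, k, pooledRatio_of_mem ht₁ ht₂, pooledRatio_of_mem hpm hmq]

theorem regression_optimal_allocation_form_general
    (K : ℕ) (c π : ℕ → ℝ)
    (hc : ∀ t ∈ Finset.Icc 1 K, 0 < c t)
    (hcmono : ∀ j ∈ Finset.Icc 1 (K - 1), c j < c (j + 1))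
    (hπpos : ∀ t ∈ Finset.Icc 1 K, 0 < π t)
    (L U : ℝ) (hL : L < 0) (hU : 0 < U) (hLU : L ^ 2 ≤ U ^ 2)
    (ρ : ℝ)
    (tstar : ℕ) (htstar_mem : tstar ∈ Finset.Icc 1 K)
    (htstar_prop : ρ > ∑ t ∈ Finset.Icc (tstar + 1) K, π t)
    (qstar R2 : ℝ)
    (hqstar : qstar = (ρ - ∑ t ∈ Finset.Icc (tstar + 1) K, π t) / π tstar)
    (hR2 : R2 = (U ^ 2 - L ^ 2) * qstar + L ^ 2)
    (Bbar : ℝ) (hBbar_pos : 0 < Bbar)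
    (hBbar_ub : Bbar < ∑ t ∈ Finset.Icc 1 K, π t * c t)
    (J : (ℕ → ℝ) → ℝ)
    (hJ : ∀ A : ℕ → ℝ,
      J A = (∑ t ∈ Finset.Icc 1 (tstar - 1), π t * L ^ 2 / A t)
        + π tstar * R2 / A tstar
        + ∑ t ∈ Finset.Icc (tstar + 1) K, π t * U ^ 2 / A t) :
    ∃ lam : ℝ, 0 ≤ lam ∧
    ∃ tminus tplus : ℕ, 1 ≤ tminus ∧ tminus ≤ tstar ∧ tstar ≤ tplus ∧ tplus ≤ K ∧
    ∃ Astar : ℕ → ℝ,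
      (∀ t ∈ Finset.Icc 1 K, 0 < Astar t ∧ Astar t ≤ 1) ∧
      (∀ s ∈ Finset.Icc 1 K, ∀ t ∈ Finset.Icc 1 K, s ≤ t → Astar t ≤ Astar s) ∧
      (∑ t ∈ Finset.Icc 1 K, π t * c t * Astar t = Bbar) ∧
      (∀ A' : ℕ → ℝ, (∀ t ∈ Finset.Icc 1 K, 0 < A' t ∧ A' t ≤ 1) →
        (∀ s ∈ Finset.Icc 1 K, ∀ t ∈ Finset.Icc 1 K, s ≤ t → A' t ≤ A' s) →
        (∑ t ∈ Finset.Icc 1 K, π t * c t * A' t ≤ Bbar) →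
        J Astar ≤ J A') ∧
      (∀ t ∈ Finset.Icc 1 K, t < tminus →
        Astar t = min 1 (Real.sqrt (L ^ 2 / (lam * c t)))) ∧
      (∀ t ∈ Finset.Icc 1 K, tminus ≤ t → t ≤ tplus → Astar t = Astar tstar) ∧
      (∀ t ∈ Finset.Icc 1 K, tplus < t →
        Astar t = min 1 (Real.sqrt (U ^ 2 / (lam * c t)))) := by
  obtain ⟨ht₁, htK⟩ := mem_Icc.mp htstar_mem
  set w : ℕ → ℝ := fun t => if t < tstar then L ^ 2 else if t = tstar then R2 else U ^ 2
  have hwL : ∀ t < tstar, w t = L ^ 2 := fun t ht => if_pos ht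
  have hwU : ∀ t, tstar < t → w t = U ^ 2 := fun t ht => by simp [w, ht.not_gt, ht.ne']
  have hL2 : 0 < L ^ 2 := by nlinarith
  have hR2pos : 0 < R2 := by
    have : 0 ≤ qstar := hqstar ▸ div_nonneg (by linarith) (hπpos tstar htstar_mem).le
    rw [hR2]
    nlinarith
  have hw : ∀ t ∈ Icc 1 K, 0 < w t := fun t _ => by
    simp only [w]
    split_ifs
    exacts [hL2, hR2pos, pow_pos hU 2]
  have hcmono' : MonotoneOn c (Set.Icc 1 K) :=
    monotoneOn_of_le_succ Set.ordConnected_Icc fun t _ ⟨ht, _⟩ ⟨_, hst⟩ => by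
      rw [Order.succ_eq_add_one] at hst ⊢
      exact (hcmono t (mem_Icc.mpr ⟨ht, by omega⟩)).le
  have hcpos : ∀ t ∈ Set.Icc 1 K, 0 < c t := fun t ht => hc t (by simpa using ht)
  have hpre : AntitoneOn (fun t => w t / c t) (Set.Ico 1 tstar) :=
    (antitoneOn_const_div (sq_nonneg L) (fun t ht => hcpos t ⟨ht.1, ht.2.le.trans htK⟩)
      (hcmono'.mono fun t ht => ⟨ht.1, ht.2.le.trans htK⟩)).congr fun t ht => by
        rw [hwL t ht.2]
  have hsuf : AntitoneOn (fun t => w t / c t) (Set.Ioc tstar K) :=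
    (antitoneOn_const_div (sq_nonneg U) (fun t ht => hcpos t ⟨ht₁.trans ht.1.le, ht.2⟩)
      (hcmono'.mono fun t ht => ⟨ht₁.trans ht.1.le, ht.2⟩)).congr fun t ht => by
        rw [hwU t ht.1]
  have hJw : ∀ A, J A = ∑ t ∈ Icc 1 K, π t * w t / A t := fun A => by
    rw [hJ, sum_Icc_one_eq_add_add _ htstar_mem]
    refine congrArg₂ (· + ·) (congrArg₂ (· + ·) (sum_congr rfl fun t ht => ?_) (by simp [w]))
      (sum_congr rfl fun t ht => ?_)
    · rw [hwL t (by simp at ht; omega)]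
    · rw [hwU t (by simp at ht; omega)]
  obtain ⟨lam, hlam, p, hpm, q, hq, A, ⟨hApos, hAanti, -⟩, hbudget, hopt, hform, hblock⟩ :=
    exists_optimal_pooled_allocation K tstar htstar_mem c π w hc hπpos hw hpre hsuf
      Bbar hBbar_pos hBbar_ub
  obtain ⟨hmq, hqK⟩ := mem_Icc.mp hq
  refine ⟨lam, hlam.le, p + 1, q, by omega, by omega, hmq, hqK, A, hApos, hAanti, hbudget,
    fun A' h₁ h₂ h₃ => ?_, fun t _ ht => ?_, fun t _ ht₁ ht₂ => hblock t (by omega) ht₂,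
    fun t _ ht => ?_⟩
  · simpa only [hJw] using hopt A' ⟨h₁, h₂, h₃⟩
  · rw [hform t (Or.inl (by omega)), hwL t (by omega)]
  · rw [hform t (Or.inr ht), hwU t (by omega)]

/-- Form of the optimal allocation for regression: minimizing
`J(A) = Σ_{t<t*} π_t L²/A_t + π_{t*} R²/A_{t*} + Σ_{t>t*} π_t U²/A_t` over monotone
non-increasing budget-feasible allocation rules admits an optimal solution `A*` that
spends exactly the budget and has the three-region form: below `t⁻` it equals
`min(1, √(L²/(λ c_t)))`, between `t⁻` and `t⁺` it is constant, and above `t⁺` it equals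
`min(1, √(U²/(λ c_t)))`, for some `λ ≥ 0` and indices `t⁻ ≤ t* ≤ t⁺`.
Costs are indexed by `{1, …, K}`. -/
theorem regression_optimal_allocation_form
    (K : ℕ) (hK : 1 ≤ K) (c π : ℕ → ℝ)
    (hc : ∀ t ∈ Finset.Icc 1 K, 0 < c t)
    (hcmono : ∀ j ∈ Finset.Icc 1 (K - 1), c j < c (j + 1))
    (hπpos : ∀ t ∈ Finset.Icc 1 K, 0 < π t)
    (hπsum : ∑ t ∈ Finset.Icc 1 K, π t = 1)
    (L U : ℝ) (hL : L < 0) (hU : 0 < U) (hLU : L ^ 2 ≤ U ^ 2)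
    (ρ : ℝ) (hρ : ρ = -L / (U - L))
    (tstar : ℕ) (htstar_mem : tstar ∈ Finset.Icc 1 K)
    (htstar_prop : ρ > ∑ t ∈ Finset.Icc (tstar + 1) K, π t)
    (htstar_min : ∀ j ∈ Finset.Icc 1 K,
      (ρ > ∑ t ∈ Finset.Icc (j + 1) K, π t) → tstar ≤ j)
    (qstar R2 : ℝ)
    (hqstar : qstar = (ρ - ∑ t ∈ Finset.Icc (tstar + 1) K, π t) / π tstar)
    (hR2 : R2 = (U ^ 2 - L ^ 2) * qstar + L ^ 2)
    (Bbar : ℝ) (hBbar_pos : 0 < Bbar)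
    (hBbar_ub : Bbar < ∑ t ∈ Finset.Icc 1 K, π t * c t)
    (J : (ℕ → ℝ) → ℝ)
    (hJ : ∀ A : ℕ → ℝ,
      J A = (∑ t ∈ Finset.Icc 1 (tstar - 1), π t * L ^ 2 / A t)
        + π tstar * R2 / A tstar
        + ∑ t ∈ Finset.Icc (tstar + 1) K, π t * U ^ 2 / A t) :
    ∃ lam : ℝ, 0 ≤ lam ∧
    ∃ tminus tplus : ℕ, 1 ≤ tminus ∧ tminus ≤ tstar ∧ tstar ≤ tplus ∧ tplus ≤ K ∧
    ∃ Astar : ℕ → ℝ,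
      (∀ t ∈ Finset.Icc 1 K, 0 < Astar t ∧ Astar t ≤ 1) ∧
      (∀ s ∈ Finset.Icc 1 K, ∀ t ∈ Finset.Icc 1 K, s ≤ t → Astar t ≤ Astar s) ∧
      (∑ t ∈ Finset.Icc 1 K, π t * c t * Astar t = Bbar) ∧
      (∀ A' : ℕ → ℝ, (∀ t ∈ Finset.Icc 1 K, 0 < A' t ∧ A' t ≤ 1) →
        (∀ s ∈ Finset.Icc 1 K, ∀ t ∈ Finset.Icc 1 K, s ≤ t → A' t ≤ A' s) →
        (∑ t ∈ Finset.Icc 1 K, π t * c t * A' t ≤ Bbar) →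
        J Astar ≤ J A') ∧
      (∀ t ∈ Finset.Icc 1 K, t < tminus →
        Astar t = min 1 (Real.sqrt (L ^ 2 / (lam * c t)))) ∧
      (∀ t ∈ Finset.Icc 1 K, tminus ≤ t → t ≤ tplus → Astar t = Astar tstar) ∧
      (∀ t ∈ Finset.Icc 1 K, tplus < t →
        Astar t = min 1 (Real.sqrt (U ^ 2 / (lam * c t)))) :=
  regression_optimal_allocation_form_general K c π hc hcmono hπpos L U hL hU hLU ρ tstar htstar_mem
    htstar_prop qstar R2 hqstar hR2 Bbar hBbar_pos hBbar_ub J hJ
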